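/- There exists a constant C > 1 such that for all sufficiently large n and all integers ℓ, ℓ' ≥ 1 with n - ℓ + ℓ' even and max{ℓ, ℓ'} ≤ n^{1/4}, the gambler's ruin transition probability p^{(n)}_{ℓℓ'} = 2^{-n}(C(n,(n-ℓ+ℓ')/2) - C(n,(n-ℓ-ℓ')/2)) satisfies C^{-1} n^{-3/2} ℓ ℓ' ≤ p^{(n)}_{ℓℓ'} ≤ C n^{-3/2} ℓ ℓ'. -/

import Mathlib

/-!
Write `p⁽ⁿ⁾_{ℓℓ'} = 2⁻ⁿ (C(n, a) - C(n, b))` with `a - b = ℓ'`, `n - a - b = ℓ`, and swap `ℓ, ℓ'`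
so that `2a ≤ n`. Telescoping with `(n + 1) (C(n, k + 1) - C(n, k)) = C(n + 1, k + 1) (n - 2k - 1)`
writes `(n + 1) (C(n, a) - C(n, b))` as a combination of the `C(n + 1, k + 1)`, `b ≤ k < a`, with
nonnegative weights summing to `ℓℓ'`. These indices lie within `n^{1/4}` of the middle `h`, and at
distance `i` from it a binomial loses at most a factor `1 - i (i + 1) / (h + 1) ≥ 1/2` against the
middle one `B`. Finally `B² n ≍ 4ⁿ⁺¹` by an elementary induction on central binomial coefficients,
so `B ≍ 2ⁿ⁺¹ / √n` and `p⁽ⁿ⁾_{ℓℓ'} ≍ ℓℓ' n^{-3/2}`.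
-/

/-- Binomial coefficient with an integer lower index, vanishing for negative indices. -/
def chooseZ (n : ℕ) (k : ℤ) : ℕ := if 0 ≤ k then n.choose k.toNat else 0

/-- The gambler's ruin `n`-step transition probability from `ℓ` to `ℓ'`
(symmetric simple random walk absorbed at `0`), by the reflection-principle formula. -/
noncomputable def pGR (n : ℕ) (ℓ ℓ' : ℤ) : ℝ :=
  ((chooseZ n (((n : ℤ) - ℓ + ℓ') / 2) : ℝ)
    - (chooseZ n (((n : ℤ) - ℓ - ℓ') / 2) : ℝ)) / 2 ^ n

open Finset

theorem chooseZ_symm (n : ℕ) (k : ℤ) : chooseZ n (n - k) = chooseZ n k := by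
  unfold chooseZ
  split_ifs with h₁ h₂ h₂
  · have hk : k.toNat ≤ n := by omega
    rw [show (n - k).toNat = n - k.toNat by omega, Nat.choose_symm hk]
  · exact Nat.choose_eq_zero_of_lt (by omega)
  · exact (Nat.choose_eq_zero_of_lt (by omega)).symm
  · rfl

theorem pGR_comm (n : ℕ) (ℓ ℓ' : ℤ) (h : ((n : ℤ) - ℓ + ℓ') % 2 = 0) :
    pGR n ℓ ℓ' = pGR n ℓ' ℓ := by
  unfold pGR
  rw [← chooseZ_symm n (((n : ℤ) - ℓ + ℓ') / 2), show (n : ℤ) - ℓ - ℓ' = n - ℓ' - ℓ by ring]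
  congr 4
  omega

theorem pGR_two_mul_add (b L L' : ℕ) :
    pGR (2 * b + L + L') L L' =
      (((2 * b + L + L').choose (b + L') : ℝ) - (2 * b + L + L').choose b) /
        2 ^ (2 * b + L + L') := by
  have ha : (((2 * b + L + L' : ℕ) : ℤ) - L + L') / 2 = ((b + L' : ℕ) : ℤ) := by omega
  have hb : (((2 * b + L + L' : ℕ) : ℤ) - L - L') / 2 = ((b : ℕ) : ℤ) := by omega
  simp only [pGR, ha, hb, chooseZ, Nat.cast_nonneg, if_true, Int.toNat_natCast]

theorem succ_mul_choose_succ_sub_choose (n k : ℕ) :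
    ((n : ℝ) + 1) * ((n.choose (k + 1) : ℝ) - n.choose k) =
      (n + 1).choose (k + 1) * ((n : ℝ) - 2 * k - 1) := by
  have h₁ : ((n : ℝ) + 1) * n.choose k = (n + 1).choose (k + 1) * ((k : ℝ) + 1) := by
    exact_mod_cast Nat.add_one_mul_choose_eq n k
  have h₂ : ((n : ℝ) + 1) * n.choose (k + 1) = (n + 1).choose (k + 1) * ((n : ℝ) - k) := by
    rcases le_or_gt k n with hk | hk
    · have h := Nat.choose_mul_succ_eq n (k + 1)
      rw [show n + 1 - (k + 1) = n - k by omega] at h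
      rw [mul_comm, ← Nat.cast_sub hk]
      exact_mod_cast h
    · simp [Nat.choose_eq_zero_of_lt (by omega : n < k + 1),
        Nat.choose_eq_zero_of_lt (by omega : n + 1 < k + 1)]
  linear_combination h₂ - h₁

theorem sum_Ico_sub_two_mul_sub_one (n b a : ℕ) (hba : b ≤ a) :
    ∑ k ∈ Ico b a, ((n : ℝ) - 2 * k - 1) = ((a : ℝ) - b) * ((n : ℝ) - a - b) := by
  induction a, hba using Nat.le_induction with
  | base => simp
  | succ a hba ih =>
    rw [sum_Ico_succ_top hba, ih]
    push_cast
    ring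

theorem succ_mul_choose_sub_choose_mem_Icc {n a b : ℕ} {lo hi : ℝ} (hba : b ≤ a) (ha : 2 * a ≤ n)
    (hlo : ∀ k ∈ Ico b a, lo ≤ (n + 1).choose (k + 1))
    (hhi : ∀ k ∈ Ico b a, ((n + 1).choose (k + 1) : ℝ) ≤ hi) :
    ((n : ℝ) + 1) * ((n.choose a : ℝ) - n.choose b) ∈
      Set.Icc (lo * (((a : ℝ) - b) * ((n : ℝ) - a - b)))
        (hi * (((a : ℝ) - b) * ((n : ℝ) - a - b))) := by
  have hcoeff : ∀ k ∈ Ico b a, (0 : ℝ) ≤ (n : ℝ) - 2 * k - 1 := by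
    intro k hk
    have : 2 * k + 1 ≤ n := by rw [mem_Ico] at hk; omega
    have : (2 * k + 1 : ℝ) ≤ n := by exact_mod_cast this
    linarith
  rw [← sum_Ico_sub_two_mul_sub_one n b a hba, mul_sum, mul_sum,
    ← sum_Ico_sub (fun k => (n.choose k : ℝ)) hba, mul_sum]
  simp only [succ_mul_choose_succ_sub_choose]
  exact ⟨sum_le_sum fun k hk => mul_le_mul_of_nonneg_right (hlo k hk) (hcoeff k hk),
    sum_le_sum fun k hk => mul_le_mul_of_nonneg_right (hhi k hk) (hcoeff k hk)⟩

theorem choose_mul_le_succ_mul_choose_sub {m h : ℕ} (hhm : h ≤ m) (hm : m ≤ 2 * h + 1) {i : ℕ}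
    (hi : i ≤ h) :
    (m.choose h : ℝ) * ((h : ℝ) + 1 - i * (i + 1)) ≤ ((h : ℝ) + 1) * m.choose (h - i) := by
  induction i with
  | zero => simp [mul_comm]
  | succ i ih =>
    have ih := ih (by omega)
    have hstep : (m.choose (h - (i + 1)) : ℝ) * ((m : ℝ) - h + i + 1) =
        m.choose (h - i) * ((h : ℝ) - i) := by
      have e := Nat.choose_succ_right_eq m (h - (i + 1))
      rw [show h - (i + 1) + 1 = h - i by omega] at e
      have : ((m - (h - (i + 1)) : ℕ) : ℝ) = (m : ℝ) - h + i + 1 := by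
        rw [Nat.cast_sub (by omega), Nat.cast_sub (by omega)]; push_cast; ring
      rw [← this, show ((h : ℝ) - i) = ((h - i : ℕ) : ℝ) by rw [Nat.cast_sub (by omega)]]
      exact_mod_cast e.symm
    have hm' : (m : ℝ) ≤ 2 * h + 1 := by exact_mod_cast hm
    have hi' : (i : ℝ) + 1 ≤ h := by exact_mod_cast hi
    have h0 : (0 : ℝ) ≤ m.choose h := Nat.cast_nonneg _
    have h1 : (0 : ℝ) ≤ m.choose (h - (i + 1)) := Nat.cast_nonneg _
    push_cast
    -- the step reduces to `(h - i) (h + 1 - i (i + 1)) - (h + i + 2) (h + 1 - (i + 1) (i + 2))`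
    -- `= 2 (i + 1) ^ 3 ≥ 0`
    nlinarith [mul_le_mul_of_nonneg_left ih (by linarith : (0 : ℝ) ≤ (h : ℝ) - i),
      mul_le_mul_of_nonneg_left hm' h1, pow_nonneg (by positivity : (0 : ℝ) ≤ i + 1) 3]

theorem choose_le_two_mul_choose_sub {m h i : ℕ} (hhm : h ≤ m) (hm : m ≤ 2 * h + 1)
    (hi : 2 * i * (i + 1) ≤ h + 1) : m.choose h ≤ 2 * m.choose (h - i) := by
  have hih : i ≤ h := by nlinarith
  have hi' : (2 * i * (i + 1) : ℝ) ≤ h + 1 := by exact_mod_cast hi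
  have key := choose_mul_le_succ_mul_choose_sub hhm hm hih
  have h0 : (0 : ℝ) ≤ m.choose h := Nat.cast_nonneg _
  have : (m.choose h : ℝ) ≤ 2 * m.choose (h - i) := by nlinarith
  exact_mod_cast this

theorem Nat.centralBinom_sq_mul_le (t : ℕ) : centralBinom t ^ 2 * (2 * t + 1) ≤ 16 ^ t := by
  induction t with
  | zero => simp
  | succ t ih =>
    have e := Nat.succ_mul_centralBinom_succ t
    refine Nat.le_of_mul_le_mul_left ?_ (by positivity : 0 < (t + 1) ^ 2)
    calc (t + 1) ^ 2 * (centralBinom (t + 1) ^ 2 * (2 * (t + 1) + 1))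
        = 4 * (2 * t + 1) * (2 * t + 3) * (centralBinom t ^ 2 * (2 * t + 1)) := by
          rw [← mul_assoc, ← mul_pow, e]; ring
      _ ≤ 4 * (2 * t + 1) * (2 * t + 3) * 16 ^ t := Nat.mul_le_mul_left _ ih
      _ ≤ 16 * (t + 1) ^ 2 * 16 ^ t := Nat.mul_le_mul_right _ (by ring_nf; omega)
      _ = (t + 1) ^ 2 * 16 ^ (t + 1) := by ring

theorem Nat.sixteen_pow_le_centralBinom_sq_mul (t : ℕ) :
    16 ^ t ≤ centralBinom t ^ 2 * (4 * t + 1) := by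
  induction t with
  | zero => simp
  | succ t ih =>
    have e := Nat.succ_mul_centralBinom_succ t
    refine Nat.le_of_mul_le_mul_left ?_ (by positivity : 0 < (t + 1) ^ 2)
    calc (t + 1) ^ 2 * 16 ^ (t + 1) = 16 * (t + 1) ^ 2 * 16 ^ t := by ring
      _ ≤ 16 * (t + 1) ^ 2 * (centralBinom t ^ 2 * (4 * t + 1)) := Nat.mul_le_mul_left _ ih
      _ = (16 * (t + 1) ^ 2 * (4 * t + 1)) * centralBinom t ^ 2 := by ring
      _ ≤ (4 * (2 * t + 1) ^ 2 * (4 * t + 5)) * centralBinom t ^ 2 :=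
          Nat.mul_le_mul_right _ (by ring_nf; omega)
      _ = (t + 1) ^ 2 * (centralBinom (t + 1) ^ 2 * (4 * (t + 1) + 1)) := by
          rw [← mul_assoc, ← mul_pow, e]; ring

theorem Nat.two_mul_choose_two_mul_add_one (t : ℕ) :
    2 * (2 * t + 1).choose t = centralBinom (t + 1) := by
  rw [centralBinom_eq_two_mul_choose, show 2 * (t + 1) = 2 * t + 1 + 1 by ring,
    choose_succ_succ', choose_symm_half]
  ring

theorem Nat.choose_half_sq_mul_le (m : ℕ) : m.choose (m / 2) ^ 2 * (m + 1) ≤ 4 ^ m := by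
  obtain ⟨t, rfl | rfl⟩ := m.even_or_odd'
  · have := centralBinom_sq_mul_le t
    rwa [show 2 * t / 2 = t by omega, ← centralBinom_eq_two_mul_choose, pow_mul,
      show (4 : ℕ) ^ 2 = 16 by rfl]
  · have := centralBinom_sq_mul_le (t + 1)
    rw [← two_mul_choose_two_mul_add_one, show (16 : ℕ) = 4 ^ 2 by rfl, ← pow_mul] at this
    rw [show (2 * t + 1) / 2 = t by omega]
    have e : 4 ^ (2 * (t + 1)) = 4 * 4 ^ (2 * t + 1) := by ring
    nlinarith

theorem Nat.four_pow_le_choose_half_sq_mul (m : ℕ) :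
    4 ^ m ≤ m.choose (m / 2) ^ 2 * (2 * m + 3) := by
  obtain ⟨t, rfl | rfl⟩ := m.even_or_odd'
  · have := sixteen_pow_le_centralBinom_sq_mul t
    rw [show 2 * t / 2 = t by omega, ← centralBinom_eq_two_mul_choose, pow_mul,
      show (4 : ℕ) ^ 2 = 16 by rfl]
    nlinarith
  · have := sixteen_pow_le_centralBinom_sq_mul (t + 1)
    rw [← two_mul_choose_two_mul_add_one, show (16 : ℕ) = 4 ^ 2 by rfl, ← pow_mul] at this
    rw [show (2 * t + 1) / 2 = t by omega]
    have e : 4 ^ (2 * (t + 1)) = 4 * 4 ^ (2 * t + 1) := by ring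
    nlinarith

theorem pGR_bounds {n b L L' : ℕ} (hn : n = 2 * b + L + L')
    (hwin : (L + L') * (L + L' + 2) ≤ n) :
    ((n + 1).choose ((n + 1) / 2) : ℝ) / 2 * (L * L') ≤ ((n : ℝ) + 1) * 2 ^ n * pGR n L L' ∧
      ((n : ℝ) + 1) * 2 ^ n * pGR n L L' ≤ (n + 1).choose ((n + 1) / 2) * (L * L') := by
  wlog hLL : L' ≤ L generalizing L L'
  · rw [pGR_comm n L L' (by omega), mul_comm (L : ℝ)]
    exact this (by omega) (by rwa [add_comm L']) (by omega)
  subst hn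
  set n := 2 * b + L + L'
  set B := (n + 1).choose ((n + 1) / 2)
  have hlo : ∀ k ∈ Ico b (b + L'), (B : ℝ) / 2 ≤ (n + 1).choose (k + 1) := by
    intro k hk
    rw [mem_Ico] at hk
    set h := (n + 1) / 2
    set i := h - (k + 1)
    have hwin' := Nat.mul_le_mul (by omega : 2 * i ≤ L + L') (by omega : 2 * i + 2 ≤ L + L' + 2)
    have := choose_le_two_mul_choose_sub (m := n + 1) (h := h) (i := i) (by omega) (by omega)
      (by nlinarith [(by omega : n ≤ 2 * h)])
    rw [show h - i = k + 1 by omega] at this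
    rw [div_le_iff₀ two_pos, mul_comm]
    exact_mod_cast this
  have hhi : ∀ k ∈ Ico b (b + L'), ((n + 1).choose (k + 1) : ℝ) ≤ B := fun k _ => by
    exact_mod_cast Nat.choose_le_middle (k + 1) (n + 1)
  obtain ⟨h₁, h₂⟩ := succ_mul_choose_sub_choose_mem_Icc (by omega) (by omega) hlo hhi
  have hcoeff : (((b + L' : ℕ) : ℝ) - b) * ((n : ℝ) - (b + L' : ℕ) - b) = L * L' := by
    simp only [n]; push_cast; ring
  rw [hcoeff] at h₁ h₂
  rw [pGR_two_mul_add, mul_assoc, mul_div_cancel₀ _ (by positivity)]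
  exact ⟨h₁, h₂⟩

theorem four_pow_succ_eq_sq (n : ℕ) : (4 : ℝ) ^ (n + 1) = (2 * 2 ^ n) ^ 2 := by
  rw [mul_pow, ← pow_mul, mul_comm n 2, pow_mul, pow_succ]; norm_num; ring

theorem choose_half_succ_mul_le (n : ℕ) :
    ((n + 1).choose ((n + 1) / 2) : ℝ) * (n * √n) ≤ 2 * (((n : ℝ) + 1) * 2 ^ n) := by
  have h : ((n + 1).choose ((n + 1) / 2) : ℝ) ^ 2 * ((n : ℝ) + 2) ≤ (2 * 2 ^ n) ^ 2 := by
    rw [← four_pow_succ_eq_sq]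
    exact_mod_cast Nat.choose_half_sq_mul_le (n + 1)
  set B := ((n + 1).choose ((n + 1) / 2) : ℝ)
  have hs : B * √n ≤ 2 * 2 ^ n := by
    rw [← pow_le_pow_iff_left₀ (by positivity) (by positivity) two_ne_zero, mul_pow,
      Real.sq_sqrt (Nat.cast_nonneg n)]
    nlinarith [sq_nonneg B]
  calc B * (n * √n) = n * (B * √n) := by ring
    _ ≤ n * (2 * 2 ^ n) := mul_le_mul_of_nonneg_left hs (Nat.cast_nonneg n)
    _ ≤ 2 * (((n : ℝ) + 1) * 2 ^ n) := by nlinarith [pow_pos (two_pos : (0 : ℝ) < 2) n]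

theorem succ_mul_two_pow_le_choose_half_succ_mul {n : ℕ} (hn : 1 ≤ n) :
    ((n : ℝ) + 1) * 2 ^ n ≤ 3 * ((n + 1).choose ((n + 1) / 2) * (n * √n)) := by
  have h : (2 * 2 ^ n) ^ 2 ≤ ((n + 1).choose ((n + 1) / 2) : ℝ) ^ 2 * (2 * (n : ℝ) + 5) := by
    rw [← four_pow_succ_eq_sq]
    have := Nat.four_pow_le_choose_half_sq_mul (n + 1)
    rw [show 2 * (n + 1) + 3 = 2 * n + 5 by ring] at this
    exact_mod_cast this
  set B := ((n + 1).choose ((n + 1) / 2) : ℝ)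
  have hn' : (1 : ℝ) ≤ n := by exact_mod_cast hn
  have hs : 2 * 2 ^ n ≤ 3 * (B * √n) := by
    rw [← pow_le_pow_iff_left₀ (by positivity) (by positivity) two_ne_zero, mul_pow (3 : ℝ),
      mul_pow B, Real.sq_sqrt (Nat.cast_nonneg n)]
    nlinarith [sq_nonneg B]
  calc ((n : ℝ) + 1) * 2 ^ n ≤ n * (2 * 2 ^ n) := by nlinarith [pow_pos (two_pos : (0 : ℝ) < 2) n]
    _ ≤ n * (3 * (B * √n)) := mul_le_mul_of_nonneg_left hs (Nat.cast_nonneg n)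
    _ = 3 * (B * (n * √n)) := by ring

theorem rpow_neg_three_div_two_mul_self_mul_sqrt {x : ℝ} (hx : 0 < x) :
    x ^ (-(3 : ℝ) / 2) * (x * √x) = 1 := by
  rw [Real.sqrt_eq_rpow, ← Real.rpow_one_add' hx.le (by norm_num), ← Real.rpow_add hx]
  norm_num

theorem add_mul_add_add_two_le {n L L' : ℕ} (hn : 64 ≤ n)
    (hL : max (L : ℝ) L' ≤ (n : ℝ) ^ ((1 : ℝ) / 4)) : (L + L') * (L + L' + 2) ≤ n := by
  have hq : ((n : ℝ) ^ ((1 : ℝ) / 4)) ^ 4 = n := by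
    rw [show (1 : ℝ) / 4 = ((4 : ℕ) : ℝ)⁻¹ by norm_num]
    exact Real.rpow_inv_natCast_pow (Nat.cast_nonneg n) (by norm_num)
  set q := (n : ℝ) ^ ((1 : ℝ) / 4)
  have hq0 : 0 ≤ q := by positivity
  have h64 : (64 : ℝ) ≤ q ^ 4 := by rw [hq]; exact_mod_cast hn
  have hq8 : 8 ≤ q ^ 2 := by nlinarith
  have hq1 : 1 ≤ q := by nlinarith
  have hLq : (L : ℝ) ≤ q := le_trans (le_max_left _ _) hL
  have hL'q : (L' : ℝ) ≤ q := le_trans (le_max_right _ _) hL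
  have hsum : (L : ℝ) + L' ≤ 2 * q := by linarith
  have : ((L : ℝ) + L') * (L + L' + 2) ≤ n := by
    calc ((L : ℝ) + L') * (L + L' + 2) ≤ 2 * q * (2 * q + 2) := by
          gcongr
      _ ≤ q ^ 4 := by nlinarith [mul_le_mul_of_nonneg_left hq8 (sq_nonneg q)]
      _ = n := hq
  exact_mod_cast this

/-- There is a constant `C > 1` such that for all sufficiently large `n` and all
`ℓ, ℓ' ≥ 1` with `n - ℓ + ℓ'` even and `max ℓ ℓ' ≤ n^{1/4}`, the gambler's ruin
transition probability satisfies `C⁻¹ n^{-3/2} ℓ ℓ' ≤ p^{(n)}_{ℓℓ'} ≤ C n^{-3/2} ℓ ℓ'`. -/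
theorem gamblers_ruin_polynomial_bounds :
    ∃ C : ℝ, 1 < C ∧ ∃ N : ℕ, ∀ n : ℕ, N ≤ n → ∀ ℓ ℓ' : ℤ, 1 ≤ ℓ → 1 ≤ ℓ' →
      ((n : ℤ) - ℓ + ℓ') % 2 = 0 → ((max ℓ ℓ' : ℤ) : ℝ) ≤ (n : ℝ) ^ ((1 : ℝ) / 4) →
      C⁻¹ * (n : ℝ) ^ (-(3 : ℝ) / 2) * (ℓ : ℝ) * (ℓ' : ℝ) ≤ pGR n ℓ ℓ'
      ∧ pGR n ℓ ℓ' ≤ C * (n : ℝ) ^ (-(3 : ℝ) / 2) * (ℓ : ℝ) * (ℓ' : ℝ) := by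
  refine ⟨6, by norm_num, 64, fun n hn ℓ ℓ' hℓ hℓ' hpar hmax => ?_⟩
  lift ℓ to ℕ using by omega
  lift ℓ' to ℕ using by omega
  push_cast at hmax ⊢
  have hwin := add_mul_add_add_two_le hn hmax
  have hsum : ℓ + ℓ' ≤ n := le_trans (Nat.le_mul_of_pos_right _ (by omega)) hwin
  obtain ⟨b, hb⟩ : ∃ b, n = 2 * b + ℓ + ℓ' := ⟨(n - ℓ - ℓ') / 2, by omega⟩
  obtain ⟨hlo, hhi⟩ := pGR_bounds hb hwin
  have hB₁ := choose_half_succ_mul_le n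
  have hB₂ := succ_mul_two_pow_le_choose_half_succ_mul (by omega : 1 ≤ n)
  have hr := rpow_neg_three_div_two_mul_self_mul_sqrt (by positivity : (0 : ℝ) < n)
  set B := ((n + 1).choose ((n + 1) / 2) : ℝ)
  set P := ((n : ℝ) + 1) * 2 ^ n
  set r := (n : ℝ) ^ (-(3 : ℝ) / 2)
  have hrX : 0 ≤ r * (ℓ * ℓ') := by positivity
  constructor
  · refine le_of_mul_le_mul_left ?_ (by positivity : 0 < P)
    linear_combination hlo + mul_le_mul_of_nonneg_left hB₂ hrX / 6 + B * (ℓ * ℓ') / 2 * hr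
  · refine le_of_mul_le_mul_left ?_ (by positivity : 0 < P)
    linear_combination hhi + mul_le_mul_of_nonneg_left hB₁ hrX - B * (ℓ * ℓ') * hr +
      4 * mul_nonneg (by positivity : 0 ≤ P) hrX
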